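/- Consequently, free energy is non-increasing under a stochastic evolution with Gibbs stationary distribution: let E : Fin n → ℝ, T, k > 0, π the Gibbs distribution, and K a row-stochastic matrix with πK = π. Then for any distribution p, F(pK) ≤ F(p), where F(p) = ∑ p i E i - k T H(p). -/

import Mathlib

open Real Finset

/-
For the Gibbs distribution π, log π i = -E i / (k T) - log Z, so for every q ≥ 0
F(q) = k T D(q ‖ π) - k T log Z ∑ q. A row-stochastic K preserves total mass and fixes π,
and relative entropy can only decrease under K (Jensen's inequality for x log x, column by
column), so F(pK) ≤ F(p).
-/

/-- The log-sum inequality: Jensen's inequality for `x log x` with unnormalized weights. -/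
theorem sum_mul_mul_log_div_sum_le {ι : Type*} {s : Finset ι} {b x : ι → ℝ}
    (hb : ∀ i ∈ s, 0 ≤ b i) (hx : ∀ i ∈ s, 0 ≤ x i) :
    (∑ i ∈ s, b i * x i) * log ((∑ i ∈ s, b i * x i) / ∑ i ∈ s, b i)
      ≤ ∑ i ∈ s, b i * (x i * log (x i)) := by
  set B := ∑ i ∈ s, b i
  rcases (sum_nonneg hb).eq_or_lt with hB | hB
  · have hb0 : ∀ i ∈ s, b i = 0 := (sum_eq_zero_iff_of_nonneg hb).mp hB.symm
    rw [sum_eq_zero fun i hi => by rw [hb0 i hi, zero_mul],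
      sum_eq_zero fun i hi => by rw [hb0 i hi, zero_mul], zero_mul]
  have hw : ∀ i ∈ s, 0 ≤ b i / B := fun i hi => div_nonneg (hb i hi) hB.le
  have hw1 : ∑ i ∈ s, b i / B = 1 := by rw [← sum_div, div_self hB.ne']
  have hnormalize : ∀ y : ι → ℝ, ∑ i ∈ s, (b i / B) • y i = (∑ i ∈ s, b i * y i) / B := fun y => by
    simp only [smul_eq_mul, div_mul_eq_mul_div, ← sum_div]
  have jensen := convexOn_mul_log.map_sum_le hw hw1 hx
  rw [hnormalize, hnormalize] at jensen
  calc (∑ i ∈ s, b i * x i) * log ((∑ i ∈ s, b i * x i) / B)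
      = B * ((∑ i ∈ s, b i * x i) / B * log ((∑ i ∈ s, b i * x i) / B)) := by
        rw [← mul_assoc, mul_div_cancel₀ _ hB.ne']
    _ ≤ B * ((∑ i ∈ s, b i * (x i * log (x i))) / B) := by gcongr
    _ = ∑ i ∈ s, b i * (x i * log (x i)) := mul_div_cancel₀ _ hB.ne'

section RelEntropy

variable {ι κ : Type*} [Fintype ι] [Fintype κ]

noncomputable def relEntropy (p q : ι → ℝ) : ℝ := ∑ i, p i * log (p i / q i)

/-- The data-processing inequality. -/
theorem relEntropy_comp_le {p q : ι → ℝ} {K : ι → κ → ℝ} (hp : ∀ i, 0 ≤ p i)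
    (hq : ∀ i, 0 < q i) (hK : ∀ i j, 0 ≤ K i j) (hKrow : ∀ i, ∑ j, K i j = 1) :
    relEntropy (fun j => ∑ i, p i * K i j) (fun j => ∑ i, q i * K i j) ≤ relEntropy p q := by
  have hpK : ∀ j, ∑ i, p i * K i j = ∑ i, q i * K i j * (p i / q i) := fun j =>
    sum_congr rfl fun i _ => by field_simp [(hq i).ne']
  calc relEntropy (fun j => ∑ i, p i * K i j) (fun j => ∑ i, q i * K i j)
      ≤ ∑ j, ∑ i, q i * K i j * (p i / q i * log (p i / q i)) := by
        refine sum_le_sum fun j _ => ?_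
        dsimp only
        rw [hpK j]
        exact sum_mul_mul_log_div_sum_le (fun i _ => mul_nonneg (hq i).le (hK i j))
          (fun i _ => div_nonneg (hp i) (hq i).le)
    _ = ∑ i, q i * (p i / q i) * log (p i / q i) := by
        rw [sum_comm]
        refine sum_congr rfl fun i _ => ?_
        rw [← sum_mul, ← mul_sum, hKrow, mul_one, mul_assoc]
    _ = relEntropy p q := sum_congr rfl fun i _ => by rw [mul_div_cancel₀ _ (hq i).ne']

end RelEntropy

section Gibbs

variable {ι : Type*} [Fintype ι] {E ρ : ι → ℝ} {c Z : ℝ}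

theorem partition_function_pos (hZ : Z = ∑ i, exp (-E i / c)) (i : ι) : 0 < Z :=
  hZ ▸ sum_pos (fun _ _ => exp_pos _) ⟨i, mem_univ i⟩

theorem gibbs_pos (hZ : Z = ∑ i, exp (-E i / c)) (hρ : ∀ i, ρ i = exp (-E i / c) / Z) (i : ι) :
    0 < ρ i :=
  hρ i ▸ div_pos (exp_pos _) (partition_function_pos hZ i)

theorem mul_log_div_gibbs (hc : c ≠ 0) (hZ : Z = ∑ i, exp (-E i / c))
    (hρ : ∀ i, ρ i = exp (-E i / c) / Z) (q : ι → ℝ) (i : ι) :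
    c * (q i * log (q i / ρ i)) = q i * E i + c * (q i * log (q i)) + c * log Z * q i := by
  rcases eq_or_ne (q i) 0 with hqi | hqi
  · simp [hqi]
  have hZpos := partition_function_pos hZ i
  rw [log_div hqi (gibbs_pos hZ hρ i).ne', hρ i,
    log_div (exp_pos _).ne' hZpos.ne', log_exp]
  field_simp
  ring

/-- The Szilard–Landauer identity `F(q) = c D(q ‖ ρ) - c log Z ∑ q` for the Gibbs
distribution `ρ` at `c = k T`. -/
theorem free_energy_eq_relEntropy_gibbs (hc : c ≠ 0) (hZ : Z = ∑ i, exp (-E i / c))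
    (hρ : ∀ i, ρ i = exp (-E i / c) / Z) (q : ι → ℝ) :
    ∑ i, q i * E i + c * ∑ i, q i * log (q i)
      = c * relEntropy q ρ - c * log Z * ∑ i, q i := by
  rw [relEntropy, mul_sum univ (fun i => q i * log (q i / ρ i)),
    sum_congr rfl fun i _ => mul_log_div_gibbs hc hZ hρ q i, sum_add_distrib, sum_add_distrib,
    ← mul_sum, ← mul_sum]
  ring

end Gibbs

theorem sum_sum_mul_eq_sum {ι κ : Type*} [Fintype ι] [Fintype κ] (p : ι → ℝ)
    {K : ι → κ → ℝ} (hKrow : ∀ i, ∑ j, K i j = 1) :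
    ∑ j, ∑ i, p i * K i j = ∑ i, p i := by
  rw [sum_comm]
  simp_rw [← mul_sum, hKrow, mul_one]

theorem free_energy_nonincreasing_under_markov_evolution_general
    (n : ℕ) (E : Fin n → ℝ) (T k : ℝ) (hT : 0 < T) (hk : 0 < k)
    (Z : ℝ) (hZ : Z = ∑ i, Real.exp (-E i / (k * T)))
    (peq : Fin n → ℝ) (hpeq : ∀ i, peq i = Real.exp (-E i / (k * T)) / Z)
    (K : Fin n → Fin n → ℝ)
    (hK : ∀ i j, 0 ≤ K i j) (hKrow : ∀ i, ∑ j, K i j = 1)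
    (hstat : ∀ j, ∑ i, peq i * K i j = peq j)
    (F : (Fin n → ℝ) → ℝ)
    (hF : ∀ q : Fin n → ℝ, F q = ∑ i, q i * E i - k * T * (-∑ i, q i * Real.log (q i)))
    (p : Fin n → ℝ) (hp : ∀ i, 0 ≤ p i) :
    F (fun j => ∑ i, p i * K i j) ≤ F p := by
  have hc : 0 < k * T := mul_pos hk hT
  have hdecay := relEntropy_comp_le hp (gibbs_pos hZ hpeq) hK hKrow
  rw [funext hstat] at hdecay
  simp only [hF, mul_neg, sub_neg_eq_add, free_energy_eq_relEntropy_gibbs hc.ne' hZ hpeq,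
    sum_sum_mul_eq_sum p hKrow]
  gcongr

theorem free_energy_nonincreasing_under_markov_evolution
    (n : ℕ) (hn : 1 ≤ n) (E : Fin n → ℝ) (T k : ℝ) (hT : 0 < T) (hk : 0 < k)
    (Z : ℝ) (hZ : Z = ∑ i, Real.exp (-E i / (k * T)))
    (peq : Fin n → ℝ) (hpeq : ∀ i, peq i = Real.exp (-E i / (k * T)) / Z)
    (K : Fin n → Fin n → ℝ)
    (hK : ∀ i j, 0 ≤ K i j) (hKrow : ∀ i, ∑ j, K i j = 1)
    (hstat : ∀ j, ∑ i, peq i * K i j = peq j)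
    (F : (Fin n → ℝ) → ℝ)
    (hF : ∀ q : Fin n → ℝ, F q = ∑ i, q i * E i - k * T * (-∑ i, q i * Real.log (q i)))
    (p : Fin n → ℝ) (hp : ∀ i, 0 ≤ p i) (hps : ∑ i, p i = 1) :
    F (fun j => ∑ i, p i * K i j) ≤ F p :=
  free_energy_nonincreasing_under_markov_evolution_general n E T k hT hk Z hZ peq hpeq K hK hKrow
    hstat F hF p hp
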